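/- Let σ ∈ 𝒞_q be a q-cycle with des(σ) = d ≥ 2 and signature sig(σ) = (a₁,…,a_q). Then σ has a realization under the multiplication map m_d (i.e., a period q orbit 𝒪 = {x₁,…,x_q} of m_d with m_d(x_i) = x_{σ(i)} for all i) if and only if a_q = 1; moreover, when a_q = 1 this realization is unique. -/

import Mathlib

open scoped Classical

noncomputable section

/-- The representative of `i : ZMod q` in `{1, …, q}`. -/
def rep (q : ℕ) [NeZero q] (i : ZMod q) : ℕ :=
  if i = 0 then q else i.val

/-- The rotation `ρ : i ↦ i + 1 (mod q)` of `ZMod q`. -/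
def rotPerm (q : ℕ) : Equiv.Perm (ZMod q) :=
  Equiv.addRight 1

/-- The descent number `des σ`: the number of `i ∈ ZMod q` with `σ(i) > σ(i+1)`,
values compared via their representatives in `{1, …, q}`. -/
def desNum (q : ℕ) [NeZero q] (σ : Equiv.Perm (ZMod q)) : ℕ :=
  (Finset.univ.filter fun i : ZMod q => rep q (σ (i + 1)) < rep q (σ i)).card

/-- `σ` is a `q`-cycle, i.e. it acts transitively on `ZMod q`. -/
def IsQCycle (q : ℕ) (σ : Equiv.Perm (ZMod q)) : Prop :=
  ∀ i j : ZMod q, ∃ n : ℕ, (σ ^ n) i = j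

/-- The transition matrix of `σ`: the `(i,j)` entry is `1` if `j` lies in the
cyclic interval `[σ(i), σ(i+1))` of `ZMod q` and `0` otherwise. -/
def transMatrix (q : ℕ) [NeZero q] (σ : Equiv.Perm (ZMod q)) :
    Matrix (ZMod q) (ZMod q) ℝ :=
  Matrix.of fun i j => if (j - σ i).val < (σ (i + 1) - σ i).val then (1 : ℝ) else 0

/-- A probability vector: non-negative components summing to `1`. -/
def IsProbVec (q : ℕ) [NeZero q] (v : ZMod q → ℝ) : Prop :=
  (∀ i, 0 ≤ v i) ∧ ∑ i, v i = 1

/-- The symmetry order of `σ`: the order of the stabilizer of `σ` in the rotation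
group `⟨ρ⟩` acting by conjugation. -/
def symOrder (q : ℕ) [NeZero q] (σ : Equiv.Perm (ZMod q)) : ℕ :=
  ((Finset.range q).filter fun j => rotPerm q ^ j * σ * (rotPerm q ^ j)⁻¹ = σ).card

/-- `F : ℝ → ℝ` is a lift of a degree `k` covering map of `ℝ/ℤ`:
a homeomorphism of `ℝ` with `F (t+1) = F t + k`. -/
def IsDegreeLift (k : ℕ) (F : ℝ → ℝ) : Prop :=
  Continuous F ∧ StrictMono F ∧ ∀ t, F (t + 1) = F t + k

/-- The fixed point of the circle map corresponding to `u` (a point with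
`F u - u ∈ ℤ`) is topologically repelling: `t ↦ F t - t` is strictly increasing
in a neighborhood of `u`. -/
def TopRepelling (F : ℝ → ℝ) (u : ℝ) : Prop :=
  ∃ ε > 0, StrictMonoOn (fun t => F t - t) (Set.Ioo (u - ε) (u + ε))

/-- `x : ZMod q → ℝ` is a period `q` orbit realizing `σ` for the circle map with
lift `F`: the points `x i` lie in `(0,1)` and are increasing with respect to the
representatives `{1, …, q}` (so that `0, x₁, …, x_q` are in positive cyclic
order), and on the circle `f(x i) = x (σ i)` for all `i`. -/
def IsRealization (q : ℕ) [NeZero q] (σ : Equiv.Perm (ZMod q))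
    (F : ℝ → ℝ) (x : ZMod q → ℝ) : Prop :=
  (∀ i, x i ∈ Set.Ioo (0 : ℝ) 1) ∧
  (∀ i j : ZMod q, rep q i < rep q j → x i < x j) ∧
  (∀ i, ∃ m : ℤ, F (x i) = x (σ i) + m)

/-- A realization of `σ` under the multiplication map `m_k : x ↦ kx (mod ℤ)`. -/
def MkRealization (q k : ℕ) [NeZero q] (σ : Equiv.Perm (ZMod q)) (x : ZMod q → ℝ) : Prop :=
  IsRealization q σ (fun t => (k : ℝ) * t) x

/-- The upper endpoint (as a real number) of the partition interval
`I i = [x i, x (i+1)]`; for `i = 0 ≡ q` the interval wraps around `0 ∈ ℝ/ℤ`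
and the endpoint is `x 1 + 1`. -/
def upperPt (q : ℕ) [NeZero q] (x : ZMod q → ℝ) (i : ZMod q) : ℝ :=
  if i = 0 then x 1 + 1 else x (i + 1)

/-- The `i`-th component of the fixed point distribution: the number of fixed
points of `m_k` (the points `j/(k-1) (mod ℤ)`) in the interior of the partition
interval `I i`. -/
def fixDist (q k : ℕ) [NeZero q] (x : ZMod q → ℝ) (i : ZMod q) : ℕ :=
  ((Finset.Icc 1 (2 * (k - 1))).filter fun j : ℕ =>
    x i < (j : ℝ) / ((k : ℝ) - 1) ∧ (j : ℝ) / ((k : ℝ) - 1) < upperPt q x i).card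

/-- The number of fixed points of `m_k` in the interval `(0, x 1)`. -/
def countFixBelow (q k : ℕ) [NeZero q] (x : ZMod q → ℝ) : ℕ :=
  ((Finset.range (k - 1)).filter fun j : ℕ =>
    0 < j ∧ (j : ℝ) / ((k : ℝ) - 1) < x 1).card

/-- The `m`-th component of the (cumulative) deployment vector: the number of
orbit points in `(0, m/(k-1))`. -/
def depCount (q k : ℕ) [NeZero q] (x : ZMod q → ℝ) (m : ℕ) : ℕ :=
  (Finset.univ.filter fun j : ZMod q => x j < (m : ℝ) / ((k : ℝ) - 1)).card

/-- The rank of a marked index `i` among the marked indices `i₁ < ⋯ < i_{d-1}`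
(ordered by their representatives in `{1, …, q}`). -/
def markRank (q : ℕ) [NeZero q] (σ : Equiv.Perm (ZMod q)) (i : ZMod q) : ℕ :=
  (Finset.univ.filter fun i' : ZMod q =>
    transMatrix q σ i' i' = 1 ∧ rep q i' ≤ rep q i).card

/-! A realization satisfies `d x_i = x_{σ i} + m_i` with integer digits `0 ≤ m_i < d`. Since
`x_1 < ⋯ < x_q`, the digits are non-decreasing in `i` and increase at every descent of `σ`; as
there are `d` descents in all, this forces a descent at `q` (that is, `a_q = 1`) and pins `m_i`
down as the number of descents before `i`. With the digits fixed, `x ↦ d x - x ∘ σ` is injective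
because `d > 1`, which gives uniqueness and, by finite dimensionality, a solution. That solution
lies in `(0, 1)` by a maximum argument along the cycle, and it is increasing because, as for
base-`d` expansions, the first place where the digit sequences along two orbits differ decides
the order. -/

section AffineRecurrence

variable {α : Type*} [Finite α] {c : ℝ}

lemma eq_zero_of_forall_mul_eq_comp (σ : α → α) (hc : 1 < |c|) {z : α → ℝ}
    (hz : ∀ i, c * z i = z (σ i)) : z = 0 := by
  cases isEmpty_or_nonempty α
  · exact Subsingleton.elim _ _
  obtain ⟨i, hi⟩ := Finite.exists_max fun i => |z i|
  have hzi : |c| * |z i| ≤ |z i| := by rw [← abs_mul, hz]; exact hi (σ i)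
  have hzi0 : |z i| = 0 := by nlinarith [abs_nonneg (z i)]
  funext j
  exact abs_nonpos_iff.1 ((hi j).trans hzi0.le)

/-- Existence comes for free: `x ↦ c • x - x ∘ σ` is an injective endomorphism of a
finite-dimensional space. -/
lemma existsUnique_mul_eq_comp_add (σ : α → α) (hc : 1 < |c|) (m : α → ℝ) :
    ∃! x : α → ℝ, ∀ i, c * x i = x (σ i) + m i := by
  let T : (α → ℝ) →ₗ[ℝ] α → ℝ := c • LinearMap.id - LinearMap.funLeft ℝ ℝ σ
  have hT : ∀ x b, T x = b ↔ ∀ i, c * x i = x (σ i) + b i := fun x b => by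
    simp only [funext_iff, T, LinearMap.sub_apply, LinearMap.smul_apply, LinearMap.id_apply,
      LinearMap.funLeft_apply, Pi.sub_apply, Pi.smul_apply, smul_eq_mul]
    exact forall_congr' fun i => by constructor <;> intro h <;> linarith
  have hinj : Function.Injective T := by
    rw [← LinearMap.ker_eq_bot, LinearMap.ker_eq_bot']
    exact fun z hz => eq_zero_of_forall_mul_eq_comp σ hc fun i => by
      simpa using (hT z 0).1 hz i
  obtain ⟨x, hx⟩ := LinearMap.injective_iff_surjective.1 hinj m
  exact ⟨x, (hT x m).1 hx, fun y hy => hinj (((hT y m).2 hy).trans hx.symm)⟩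

variable {σ : Equiv.Perm α} {x m : α → ℝ}

/-- A point at the maximum `1` can only be mapped to `1` with the maximal digit `c - 1`; by
transitivity every digit would then be maximal. -/
lemma lt_one_of_mul_eq_comp_add (hσ : ∀ i j, ∃ n : ℕ, (σ ^ n) i = j) (hc : 1 < c)
    (hx : ∀ i, c * x i = x (σ i) + m i) (hm : ∀ i, m i ≤ c - 1) {j : α} (hj : m j < c - 1)
    (i : α) : x i < 1 := by
  have : Nonempty α := ⟨j⟩
  have hle : ∀ i, x i ≤ 1 := by
    obtain ⟨k, hk⟩ := Finite.exists_max x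
    have : c * x k ≤ x k + (c - 1) := by linarith [hx k, hk (σ k), hm k]
    have : x k ≤ 1 := by nlinarith
    exact fun i => (hk i).trans this
  have hstep : ∀ k, x k = 1 → x (σ k) = 1 ∧ m k = c - 1 := fun k hk => by
    have := hx k
    rw [hk, mul_one] at this
    constructor <;> linarith [hle (σ k), hm k]
  refine (hle i).lt_of_ne fun hi => ?_
  obtain ⟨n, rfl⟩ := hσ i j
  have horbit : ∀ n : ℕ, x ((σ ^ n) i) = 1 := fun n => by
    induction n with
    | zero => exact hi
    | succ n ih => rw [pow_succ', Equiv.Perm.mul_apply]; exact (hstep _ ih).1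
  exact hj.ne (hstep _ (horbit n)).2

lemma pos_of_mul_eq_comp_add (hσ : ∀ i j, ∃ n : ℕ, (σ ^ n) i = j) (hc : 1 < c)
    (hx : ∀ i, c * x i = x (σ i) + m i) (hm : ∀ i, 0 ≤ m i) {j : α} (hj : 0 < m j)
    (i : α) : 0 < x i := by
  have := lt_one_of_mul_eq_comp_add (x := fun i => 1 - x i) (m := fun i => c - 1 - m i) hσ hc
    (fun i => by linarith [hx i]) (fun i => by linarith [hm i]) (j := j) (by linarith) i
  linarith

end AffineRecurrence

lemma zero_le_and_lt_of_mul_eq_add {α : Type*} {σ : α → α} {d : ℕ} {x : α → ℝ} {m : α → ℤ}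
    (hIoo : ∀ i, x i ∈ Set.Ioo (0 : ℝ) 1) (hm : ∀ i, (d : ℝ) * x i = x (σ i) + m i) (i : α) :
    0 ≤ m i ∧ m i < d := by
  have := hm i
  have := (hIoo i).1; have := (hIoo i).2; have := (hIoo (σ i)).1; have := (hIoo (σ i)).2
  have hd : (0 : ℝ) ≤ d := Nat.cast_nonneg d
  have h₁ : ((-1 : ℤ) : ℝ) < m i := by push_cast; nlinarith
  have h₂ : (m i : ℝ) < ((d : ℤ) : ℝ) := by push_cast; nlinarith
  exact ⟨by have := Int.cast_lt.1 h₁; omega, Int.cast_lt.1 h₂⟩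

namespace MinimalRealization

section Rep

variable {q : ℕ} [NeZero q]

lemma rep_pos (i : ZMod q) : 0 < rep q i := by
  unfold rep
  split_ifs with h
  · exact Nat.pos_of_neZero q
  · exact Nat.pos_of_ne_zero fun h0 => h ((ZMod.val_eq_zero i).1 h0)

lemma rep_le (i : ZMod q) : rep q i ≤ q := by
  unfold rep
  split_ifs
  exacts [le_rfl, (ZMod.val_lt i).le]

lemma rep_zero : rep q (0 : ZMod q) = q := if_pos rfl

@[simp] lemma natCast_rep (i : ZMod q) : ((rep q i : ℕ) : ZMod q) = i := by
  unfold rep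
  split_ifs with h
  · simp [h]
  · exact ZMod.natCast_zmod_val i

lemma rep_injective : Function.Injective (rep q) :=
  Function.LeftInverse.injective (g := fun r : ℕ => (r : ZMod q)) natCast_rep

lemma rep_natCast {r : ℕ} (hr : 0 < r) (hrq : r ≤ q) : rep q (r : ZMod q) = r := by
  rcases hrq.eq_or_lt with rfl | hlt
  · simp [rep]
  · have hr : (r : ZMod q) ≠ 0 := by
      rw [Ne, ← ZMod.val_eq_zero, ZMod.val_natCast_of_lt hlt]; omega
    simp [rep, hr, ZMod.val_natCast_of_lt hlt]

lemma rep_one (hq : 2 ≤ q) : rep q (1 : ZMod q) = 1 := by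
  simpa using rep_natCast (q := q) one_pos (by omega)

lemma val_sub (a b : ZMod q) :
    ((b - a).val : ℤ) = rep q b - rep q a + if rep q b < rep q a then (q : ℤ) else 0 := by
  have ha := rep_pos a; have ha' := rep_le a; have hb := rep_pos b; have hb' := rep_le b
  have hcast : b - a = (((rep q b - rep q a + if rep q b < rep q a then (q : ℤ) else 0 : ℤ)) :
      ZMod q) := by
    split_ifs <;> push_cast <;> simp
  rw [hcast, ZMod.val_intCast]
  apply Int.emod_eq_of_lt <;> split_ifs <;> omega

end Rep

section Descents

variable {q : ℕ} [NeZero q] (σ : Equiv.Perm (ZMod q))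

def IsDescent (i : ZMod q) : Prop :=
  rep q (σ (i + 1)) < rep q (σ i)

def descentsBelow (r : ℕ) : ℕ :=
  ∑ t ∈ Finset.Ico 1 r, if IsDescent σ t then 1 else 0

/-- The first base-`d` digit `⌊d x_i⌋` that any realization must assign to `x_i`. -/
def digit (i : ZMod q) : ℕ :=
  descentsBelow σ (rep q i)

lemma descentsBelow_mono : Monotone (descentsBelow σ) := fun _ _ h =>
  Finset.sum_le_sum_of_subset (Finset.Ico_subset_Ico_right h)

lemma descentsBelow_one : descentsBelow σ 1 = 0 := by
  simp [descentsBelow]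

lemma descentsBelow_succ {r : ℕ} (hr : 0 < r) :
    descentsBelow σ (r + 1) = descentsBelow σ r + if IsDescent σ r then 1 else 0 :=
  Finset.sum_Ico_succ_top hr _

lemma desNum_eq : desNum q σ = descentsBelow σ q + if IsDescent σ 0 then 1 else 0 := by
  have hsum : desNum q σ = ∑ r ∈ Finset.Icc 1 q, if IsDescent σ r then 1 else 0 := by
    rw [desNum, Finset.card_filter]
    refine Finset.sum_nbij' (rep q) (fun r => (r : ZMod q)) (fun i _ => ?_) (fun _ _ => by simp)
      (fun i _ => natCast_rep i) (fun r hr => ?_) (fun i _ => by simp [IsDescent])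
    · exact Finset.mem_Icc.2 ⟨rep_pos i, rep_le i⟩
    · obtain ⟨h1, h2⟩ := Finset.mem_Icc.1 hr
      exact rep_natCast h1 h2
  rw [hsum, ← Finset.Ico_add_one_right_eq_Icc, descentsBelow, Finset.sum_Ico_succ_top
    (Nat.pos_of_neZero q), ZMod.natCast_self]

lemma desNum_le : desNum q σ ≤ q :=
  (Finset.card_filter_le _ _).trans_eq (by simp)

lemma strictMonoOn_toLex_descentsBelow :
    StrictMonoOn (fun r : ℕ => toLex (descentsBelow σ r, rep q (σ r))) (Set.Icc 1 q) := by
  refine strictMonoOn_of_lt_add_one Set.ordConnected_Icc fun a _ ha ha1 => ?_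
  obtain ⟨ha0, -⟩ := ha
  obtain ⟨-, haq⟩ := ha1
  rw [descentsBelow_succ σ ha0, Prod.Lex.toLex_lt_toLex]
  dsimp only
  by_cases hD : IsDescent σ a
  · simp [hD]
  · refine Or.inr ⟨by simp [hD], lt_of_le_of_ne ?_ fun h => ?_⟩
    · push_cast; exact not_lt.1 hD
    · have := congrArg (rep q) (σ.injective (rep_injective h))
      rw [rep_natCast ha0 (by omega), rep_natCast (by omega) haq] at this
      omega

lemma toLex_digit_lt_toLex_digit {i j : ZMod q} (h : rep q i < rep q j) :
    toLex (digit σ i, rep q (σ i)) < toLex (digit σ j, rep q (σ j)) := by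
  simpa only [digit, natCast_rep] using
    strictMonoOn_toLex_descentsBelow σ ⟨rep_pos i, rep_le i⟩ ⟨rep_pos j, rep_le j⟩ h

/-- Two points that are ordered and carry the same digits along their whole orbits would stay
ordered forever; iterating along the cycle from `i` to `j = σ^s i` then yields an infinite
increasing sequence in `{1, …, q}`. -/
lemma exists_digit_ne (hσ : IsQCycle q σ) {i j : ZMod q} (h : rep q i < rep q j) :
    ∃ n : ℕ, digit σ ((σ ^ n) i) ≠ digit σ ((σ ^ n) j) := by
  by_contra! hdig
  have hrep : ∀ n : ℕ, rep q ((σ ^ n) i) < rep q ((σ ^ n) j) := by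
    intro n
    induction n with
    | zero => exact h
    | succ n ih =>
      rw [pow_succ', Equiv.Perm.mul_apply, Equiv.Perm.mul_apply]
      have := Prod.Lex.toLex_lt_toLex.1 (toLex_digit_lt_toLex_digit σ ih)
      rw [hdig n] at this
      simpa using this
  obtain ⟨s, rfl⟩ := hσ i j
  have hmono : StrictMono fun k : ℕ => rep q ((σ ^ (k * s)) i) := by
    refine strictMono_nat_of_lt_succ fun k => ?_
    simpa only [← Equiv.Perm.mul_apply, ← pow_add, add_one_mul, add_comm s] using hrep (k * s)
  have := hmono.id_le (q + 1)
  have := rep_le ((σ ^ ((q + 1) * s)) i)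
  simp only [id] at *
  omega

lemma isDescent_zero_iff_transMatrix (hq : 2 ≤ q) :
    IsDescent σ 0 ↔ transMatrix q σ 0 0 = 1 := by
  have hne : rep q (σ 1) ≠ rep q (σ 0) := fun h => by
    have := congrArg (rep q) (σ.injective (rep_injective h))
    rw [rep_one hq, rep_zero] at this
    omega
  have h0 := val_sub (σ 0) 0
  have h1 := val_sub (σ 0) (σ 1)
  rw [rep_zero, if_neg (rep_le (σ 0)).not_gt] at h0
  have := rep_pos (σ 1); have := rep_le (σ 1)
  simp only [transMatrix, IsDescent, Matrix.of_apply, zero_add, ite_eq_left_iff, zero_ne_one,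
    imp_false, not_not]
  split_ifs at h1 <;> constructor <;> intro <;> omega

lemma digit_one (hq : 2 ≤ q) : digit σ 1 = 0 := by
  rw [digit, rep_one hq, descentsBelow_one]

lemma digit_zero_add_one (h0 : IsDescent σ 0) : digit σ 0 + 1 = desNum q σ := by
  rw [desNum_eq, if_pos h0, digit, rep_zero]

lemma digit_le_digit_zero (i : ZMod q) : digit σ i ≤ digit σ 0 := by
  rw [digit, digit, rep_zero]
  exact descentsBelow_mono σ (rep_le i)

end Descents

section Realization

variable {q : ℕ} [NeZero q] {σ : Equiv.Perm (ZMod q)} {d : ℕ} {x : ZMod q → ℝ}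

lemma add_ite_isDescent_le (hIoo : ∀ i, x i ∈ Set.Ioo (0 : ℝ) 1)
    (hmono : ∀ i j : ZMod q, rep q i < rep q j → x i < x j) {m : ZMod q → ℤ}
    (hm : ∀ i, (d : ℝ) * x i = x (σ i) + m i) {r : ℕ} (hr : 0 < r) (hrq : r < q) :
    m r + (if IsDescent σ r then 1 else 0) ≤ m (r + 1 : ℕ) := by
  have hlt : x r < x (r + 1 : ℕ) := hmono _ _ <| by
    rw [rep_natCast hr hrq.le, rep_natCast (by omega) hrq]; omega
  have hdx : (d : ℝ) * x r ≤ d * x (r + 1 : ℕ) := by gcongr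
  have e₁ := hm r
  have e₂ := hm (r + 1 : ℕ)
  split_ifs with hD
  · have : x (σ (r + 1 : ℕ)) < x (σ r) := hmono _ _ (by rwa [Nat.cast_succ])
    have : (m r : ℝ) < m (r + 1 : ℕ) := by linarith
    exact_mod_cast this
  · have := (hIoo (σ r)).1
    have := (hIoo (σ (r + 1 : ℕ))).2
    have : (m r : ℝ) < m (r + 1 : ℕ) + 1 := by linarith
    have : m r < m (r + 1 : ℕ) + 1 := by exact_mod_cast this
    omega

lemma lt_of_digit_lt_or_apply_lt (hIoo : ∀ i, x i ∈ Set.Ioo (0 : ℝ) 1)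
    (hx : ∀ i, (d : ℝ) * x i = x (σ i) + digit σ i) {i j : ZMod q}
    (h : digit σ i < digit σ j ∨ digit σ i = digit σ j ∧ x (σ i) < x (σ j)) : x i < x j := by
  have hdx : 0 < (d : ℝ) * (x j - x i) := by
    rw [mul_sub, hx i, hx j]
    obtain hlt | ⟨heq, hlt⟩ := h
    · have : (digit σ i : ℝ) + 1 ≤ digit σ j := by exact_mod_cast hlt
      linarith [(hIoo (σ i)).2, (hIoo (σ j)).1]
    · rw [heq]
      linarith
  linarith [pos_of_mul_pos_right hdx (Nat.cast_nonneg d)]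

/-- The first index along the orbits at which the digits of `x_i` and `x_j` differ decides
their order, as for base-`d` expansions. -/
lemma lt_of_digit_pow_ne (hIoo : ∀ i, x i ∈ Set.Ioo (0 : ℝ) 1)
    (hx : ∀ i, (d : ℝ) * x i = x (σ i) + digit σ i) (n : ℕ) {i j : ZMod q}
    (hij : rep q i < rep q j) (hne : digit σ ((σ ^ n) i) ≠ digit σ ((σ ^ n) j)) : x i < x j := by
  induction n generalizing i j with
  | zero =>
    exact lt_of_digit_lt_or_apply_lt hIoo hx (Or.inl ((descentsBelow_mono σ hij.le).lt_of_ne hne))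
  | succ n ih =>
    refine lt_of_digit_lt_or_apply_lt hIoo hx ?_
    obtain hlt | ⟨heq, hσij⟩ := Prod.Lex.toLex_lt_toLex.1 (toLex_digit_lt_toLex_digit σ hij)
    · exact Or.inl hlt
    · exact Or.inr ⟨heq, ih hσij (by simpa only [pow_succ, Equiv.Perm.mul_apply] using hne)⟩

end Realization

end MinimalRealization

namespace MkRealization

open MinimalRealization

variable {q : ℕ} [NeZero q] {σ : Equiv.Perm (ZMod q)} {d : ℕ} {x : ZMod q → ℝ}

lemma isDescent_zero_and_mul_eq_add_digit (hx : MkRealization q d σ x)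
    (hdes : desNum q σ = d) :
    IsDescent σ 0 ∧ ∀ i, (d : ℝ) * x i = x (σ i) + digit σ i := by
  obtain ⟨hIoo, hmono, hm⟩ := hx
  choose m hm using hm
  replace hm : ∀ i, (d : ℝ) * x i = x (σ i) + m i := hm
  have hm_bounds := zero_le_and_lt_of_mul_eq_add hIoo hm
  let g : ℕ → ℤ := fun r => m r - descentsBelow σ r
  have hg : MonotoneOn g (Set.Icc 1 q) :=
    monotoneOn_of_le_add_one Set.ordConnected_Icc fun r _ hr hr₁ => by
      have := add_ite_isDescent_le hIoo hmono hm hr.1 hr₁.2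
      simp only [g, descentsBelow_succ σ hr.1]
      push_cast at this ⊢
      split_ifs at this ⊢ <;> omega
  have hq : 1 ≤ q := Nat.pos_of_neZero q
  have hg₁q := hg (Set.left_mem_Icc.2 hq) (Set.right_mem_Icc.2 hq) hq
  have hrep : ∀ i, rep q i ∈ Set.Icc 1 q := fun i => ⟨rep_pos i, rep_le i⟩
  have h₁ := (hm_bounds 1).1
  have h₀ := (hm_bounds 0).2
  have hsum := desNum_eq σ
  simp only [g, descentsBelow_one, Nat.cast_one, ZMod.natCast_self] at hg₁q
  -- `0 ≤ g 1 ≤ g q < d - descentsBelow σ q`, while `descentsBelow σ q` falls short of `d` by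
  -- one exactly when `σ` descends at `0`
  have hdesc : IsDescent σ 0 := by
    by_contra hD
    rw [if_neg hD] at hsum
    omega
  rw [if_pos hdesc] at hsum
  refine ⟨hdesc, fun i => ?_⟩
  have hlo := hg (Set.left_mem_Icc.2 hq) (hrep i) (rep_pos i)
  have hhi := hg (hrep i) (Set.right_mem_Icc.2 hq) (rep_le i)
  simp only [g, descentsBelow_one, Nat.cast_one, ZMod.natCast_self, natCast_rep] at hlo hhi
  have : m i = digit σ i := by simp only [digit]; omega
  rw [hm i, this, Int.cast_natCast]

lemma of_mul_eq_add_digit (hσ : IsQCycle q σ) (hq : 2 ≤ q) (hd : 2 ≤ d)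
    (hdes : desNum q σ = d) (hdesc : IsDescent σ 0)
    (hx : ∀ i, (d : ℝ) * x i = x (σ i) + digit σ i) : MkRealization q d σ x := by
  have hc : (1 : ℝ) < d := by exact_mod_cast hd
  have hdigit₀ : (digit σ 0 : ℝ) = d - 1 := by
    rw [← hdes, ← digit_zero_add_one σ hdesc]; push_cast; ring
  have hdigit_le : ∀ i, (digit σ i : ℝ) ≤ d - 1 := fun i => by
    rw [← hdigit₀]; exact_mod_cast digit_le_digit_zero σ i
  have hIoo : ∀ i, x i ∈ Set.Ioo (0 : ℝ) 1 := fun i =>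
    ⟨pos_of_mul_eq_comp_add hσ hc hx (fun _ => Nat.cast_nonneg _) (j := 0) (by linarith) i,
      lt_one_of_mul_eq_comp_add hσ hc hx hdigit_le (j := 1) (by simp [digit_one σ hq, hc]) i⟩
  refine ⟨hIoo, fun i j hij => ?_, fun i => ⟨digit σ i, by simpa using hx i⟩⟩
  obtain ⟨n, hn⟩ := exists_digit_ne σ hσ hij
  exact lt_of_digit_pow_ne hIoo hx n hij hn

end MkRealization

theorem minimal_realization_iff_general (q d : ℕ) [NeZero q]
    (σ : Equiv.Perm (ZMod q)) (hσ : IsQCycle q σ) (hd : desNum q σ = d)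
    (hd2 : 2 ≤ d) :
    ((∃ x : ZMod q → ℝ, MkRealization q d σ x) ↔ transMatrix q σ 0 0 = 1) ∧
    (transMatrix q σ 0 0 = 1 → ∃! x : ZMod q → ℝ, MkRealization q d σ x) := by
  have hq : 2 ≤ q := hd2.trans (hd ▸ MinimalRealization.desNum_le σ)
  rw [← MinimalRealization.isDescent_zero_iff_transMatrix σ hq]
  obtain ⟨x₀, hx₀, hx₀_unique⟩ := existsUnique_mul_eq_comp_add σ
    (by rw [Nat.abs_cast]; exact_mod_cast hd2) fun i => (MinimalRealization.digit σ i : ℝ)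
  have hx₀_real := fun hdesc => MkRealization.of_mul_eq_add_digit hσ hq hd2 hd hdesc hx₀
  refine ⟨⟨fun ⟨x, hx⟩ => (hx.isDescent_zero_and_mul_eq_add_digit hd).1,
    fun hdesc => ⟨x₀, hx₀_real hdesc⟩⟩, fun hdesc => ⟨x₀, hx₀_real hdesc, fun x hx => ?_⟩⟩
  exact hx₀_unique x (hx.isDescent_zero_and_mul_eq_add_digit hd).2

/-- A `q`-cycle `σ` with `des σ = d ≥ 2` and signature `(a₁, …, a_q)` has a
realization under `m_d` iff `a_q = 1` (here `a_q` is the diagonal entry of the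
transition matrix at the index `q ≡ 0`); in that case the realization is
unique. -/
theorem minimal_realization_iff (q d : ℕ) [NeZero q] (hq : 2 ≤ q)
    (σ : Equiv.Perm (ZMod q)) (hσ : IsQCycle q σ) (hd : desNum q σ = d)
    (hd2 : 2 ≤ d) :
    ((∃ x : ZMod q → ℝ, MkRealization q d σ x) ↔ transMatrix q σ 0 0 = 1) ∧
    (transMatrix q σ 0 0 = 1 → ∃! x : ZMod q → ℝ, MkRealization q d σ x) :=
  minimal_realization_iff_general q d σ hσ hd hd2
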